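/- arXiv:2003.03367 — 5 statements merged into one kernel-verified Lean document; each statement's English description precedes it below -/
import Mathlib

section
/- Let d ≥ 1 and let ν be a translation-invariant probability measure on the space {0,1}^{→E^d} of directed nearest-neighbor edge configurations on ℤ^d such that ν-almost surely the configuration graph G has out-degree one and is undirected-acyclic. Then ν-almost surely the following holds: for every weak component C of G, the backbone B(C) = {x ∈ C : the backward cluster C^b_x is infinite} is either empty, or there is a bijection γ : ℤ → B(C) such that ⟨γ(i), γ(i+1)⟩ is a directed edge of G for every i ∈ ℤ (that is, B(C) is a doubly-infinite directed path). -/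
/-!
Each vertex has exactly one outgoing edge, so following it defines a map `f`; acyclicity rules
out periodic orbits of `f` (in a forest an orbit can only bounce along a single edge, which is a
directed 2-cycle). The backbone `B` is mapped into itself by `f`, and onto itself because the
graph is locally finite (König). Injectivity of `f` on `B` is the probabilistic input: let every
backbone vertex send unit mass to its successor. Translation invariance makes the expected mass
received at a vertex equal to the expected mass sent, which is `ν(x ∈ B)`, while every backbone
vertex receives at least one unit; so almost surely no vertex has two backbone predecessors.
Then `f` permutes `B` without periodic points, its orbits in `B` are bi-infinite paths, and a
weak component, being a set of vertices whose forward orbits merge, meets `B` in at most one of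
them.
-/

open MeasureTheory

/-- Vertices of the `d`-dimensional lattice. -/
abbrev Vtx (d : ℕ) := Fin d → ℤ

/-- ℓ¹-distance on `ℤ^d`. -/
def dist1 {d : ℕ} (x y : Vtx d) : ℤ := ∑ i, |x i - y i|

/-- A directed nearest-neighbor edge configuration on `ℤ^d` (the value is only relevant
on pairs at ℓ¹-distance one). -/
abbrev DConfig (d : ℕ) := Vtx d → Vtx d → Bool

/-- `⟨x,y⟩` is a directed edge of the configuration graph `G` of `η`. -/
def DEdge {d : ℕ} (η : DConfig d) (x y : Vtx d) : Prop :=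
  dist1 x y = 1 ∧ η x y = true

/-- Translation of a directed configuration by `z`. -/
def shiftD {d : ℕ} (z : Vtx d) (η : DConfig d) : DConfig d :=
  fun x y => η (x + z) (y + z)

/-- There is a directed path in `G` from `y` to `x`. -/
def Reaches {d : ℕ} (η : DConfig d) : Vtx d → Vtx d → Prop :=
  Relation.ReflTransGen (DEdge η)

/-- The backward cluster of `x`. -/
def bwdCluster {d : ℕ} (η : DConfig d) (x : Vtx d) : Set (Vtx d) :=
  {y | Reaches η y x}

/-- Adjacency in the underlying undirected graph. -/
def UAdj {d : ℕ} (η : DConfig d) (x y : Vtx d) : Prop :=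
  DEdge η x y ∨ DEdge η y x

/-- `x` and `y` lie in the same weak component. -/
def WeakConn {d : ℕ} (η : DConfig d) : Vtx d → Vtx d → Prop :=
  Relation.ReflTransGen (UAdj η)



open Function Set
open scoped ENNReal

namespace Relation

variable {α β : Type*}

theorem reflTransGen_onFun_equiv {r : β → β → Prop} (e : α ≃ β) {a b : α} :
    ReflTransGen (r on e) a b ↔ ReflTransGen r (e a) (e b) := by
  refine ⟨fun h => ReflTransGen.lift e (fun _ _ h => h) _ _ h, fun h => ?_⟩
  have := ReflTransGen.lift e.symm (p := r on e) (fun x y h => by simpa [onFun] using h) _ _ h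
  simpa [onFun] using this

theorem exists_rel_infinite_of_infinite {r : α → α → Prop} {x : α}
    (hfin : {y | r y x}.Finite) (hx : {y | ReflTransGen r y x}.Infinite) :
    ∃ y, r y x ∧ {z | ReflTransGen r z y}.Infinite := by
  by_contra! h
  refine hx (((hfin.biUnion h).insert x).subset fun z hz => ?_)
  rcases ReflTransGen.cases_tail hz with rfl | ⟨y, hzy, hyx⟩
  · exact mem_insert _ _
  · exact mem_insert_of_mem x (mem_biUnion hyx hzy)

end Relation

namespace Function

variable {α : Type*} {f : α → α}

theorem reflTransGen_iff_exists_iterate_eq {a b : α} :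
    Relation.ReflTransGen (fun x y => y = f x ∨ x = f y) a b ↔ ∃ m n, f^[m] a = f^[n] b := by
  constructor
  · intro h
    induction h with
    | refl => exact ⟨0, 0, rfl⟩
    | tail _ hbc ih =>
      obtain ⟨m, n, h⟩ := ih
      rcases hbc with rfl | rfl
      · refine ⟨m + 1, n, ?_⟩
        rw [iterate_succ_apply', h, ← iterate_succ_apply' f, iterate_succ_apply]
      · exact ⟨m, n + 1, by rw [h, iterate_succ_apply]⟩
  · rintro ⟨m, n, h⟩
    have forward : ∀ (k : ℕ) (x : α),
        Relation.ReflTransGen (fun x y => y = f x ∨ x = f y) x (f^[k] x) := fun k x => by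
      induction k with
      | zero => exact .refl
      | succ k ih => exact ih.tail (.inl (iterate_succ_apply' f k x))
    have : Std.Symm fun x y : α => y = f x ∨ x = f y := ⟨fun _ _ => Or.symm⟩
    exact (forward m a).trans (h ▸ Std.Symm.symm _ _ (forward n b))

theorem exists_injective_orbit_of_bijOn (hf : periodicPts f = ∅) {B : Set α}
    (hB : BijOn f B B) {y₀ : α} (hy₀ : y₀ ∈ B) :
    ∃ γ : ℤ → α, Injective γ ∧ range γ = {y | y ∈ B ∧ ∃ m n, f^[m] y₀ = f^[n] y} ∧
      ∀ i, γ (i + 1) = f (γ i) := by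
  let σ : Equiv.Perm B := hB.equiv f
  let γ : ℤ → α := fun n => (σ ^ n) ⟨y₀, hy₀⟩
  have hmem : ∀ n, γ n ∈ B := fun n => Subtype.prop _
  have hstep : ∀ n, γ (n + 1) = f (γ n) := fun n => by
    simp only [γ, add_comm n 1, zpow_one_add, Equiv.Perm.mul_apply]
    rfl
  have hiter : ∀ n (k : ℕ), γ (n + k) = f^[k] (γ n) := fun n k => by
    induction k with
    | zero => simp
    | succ k ih => rw [Nat.cast_succ, ← add_assoc, hstep, ih, iterate_succ_apply']
  have hback : ∀ (m : ℕ) (y : α), y ∈ B → ∀ n, f^[m] y = γ n → y = γ (n - m) := by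
    intro m
    induction m with
    | zero => simp
    | succ m ih =>
      intro y hy n h
      rw [iterate_succ_apply] at h
      refine hB.injOn hy (hmem _) ?_
      rw [← hstep, ih (f y) (hB.mapsTo hy) n h]
      congr 1
      push_cast
      ring
  refine ⟨γ, fun i j hij => ?_, ?_, hstep⟩
  · wlog hle : i ≤ j generalizing i j
    · exact (this j i hij.symm (le_of_not_ge hle)).symm
    obtain ⟨k, rfl⟩ := Int.le.dest hle
    rcases Nat.eq_zero_or_pos k with rfl | hk
    · simp
    · have hper : IsPeriodicPt f k (γ i) := by rw [IsPeriodicPt, IsFixedPt, ← hiter, hij]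
      exact absurd (mk_mem_periodicPts hk hper) (hf ▸ notMem_empty _)
  · ext y
    constructor
    · rintro ⟨n, rfl⟩
      refine ⟨hmem n, n.toNat, (-n).toNat, ?_⟩
      rw [← hiter, show n + ((-n).toNat : ℤ) = 0 + (n.toNat : ℤ) by omega, hiter]
      rfl
    · rintro ⟨hy, m, n, h⟩
      have : f^[n] y = γ (0 + m) := by rw [hiter]; exact h.symm
      exact ⟨_, (hback n y hy _ this).symm⟩

end Function

namespace SimpleGraph

variable {V : Type*} {G : SimpleGraph V} {f : V → V}

def orbitWalk (hf : ∀ v, G.Adj v (f v)) : (n : ℕ) → (v : V) → G.Walk v (f^[n] v)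
  | 0, _ => .nil
  | n + 1, v => .cons (hf v) (orbitWalk hf n (f v))

theorem support_orbitWalk (hf : ∀ v, G.Adj v (f v)) (n : ℕ) (v : V) :
    (orbitWalk hf n v).support = (List.range (n + 1)).map (f^[·] v) := by
  induction n generalizing v with
  | zero => rfl
  | succ n ih =>
    change v :: (orbitWalk hf n (f v)).support = _
    rw [ih, List.range_succ_eq_map (n := n + 1), List.map_cons, List.map_map]
    rfl

theorem length_orbitWalk (hf : ∀ v, G.Adj v (f v)) (n : ℕ) (v : V) :
    (orbitWalk hf n v).length = n := by
  induction n generalizing v with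
  | zero => rfl
  | succ n ih => simp [orbitWalk, ih]

theorem IsAcyclic.minimalPeriod_eq_two (hG : G.IsAcyclic) (hf : ∀ v, G.Adj v (f v)) {a : V}
    (ha : a ∈ periodicPts f) : minimalPeriod f a = 2 := by
  obtain ⟨q, hq⟩ : ∃ q, minimalPeriod f a = q + 1 :=
    Nat.exists_eq_add_one.mpr (minimalPeriod_pos_of_mem_periodicPts ha)
  have hadj : G.Adj a (f^[q] a) := by
    have hret := iterate_minimalPeriod (f := f) (x := a)
    rw [hq, iterate_succ_apply'] at hret
    have h := hf (f^[q] a)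
    rw [hret] at h
    exact h.symm
  have hpath : (orbitWalk hf q a).IsPath := by
    rw [Walk.isPath_def, support_orbitWalk]
    refine List.Nodup.map_on (fun i hi j hj hij => iterate_injOn_Iio_minimalPeriod ?_ ?_ hij)
      List.nodup_range <;> simp_all
  have := hG.subsingleton_path a (f^[q] a)
  have := congrArg (fun p : G.Path a (f^[q] a) => p.1.length)
    (Subsingleton.elim ⟨_, hpath⟩ (Path.singleton hadj))
  simp only [length_orbitWalk, Path.singleton, Walk.length_cons, Walk.length_nil] at this
  omega

end SimpleGraph

section Measurability

variable {Ω V : Type*} [MeasurableSpace Ω]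

theorem measurable_isChain {r : Ω → V → V → Prop} (hr : ∀ a b, Measurable fun ω => r ω a b) :
    ∀ l : List V, Measurable fun ω => l.IsChain (r ω)
  | [] => by simp
  | [_] => by simp
  | a :: b :: l => by
    simp only [List.isChain_cons_cons]
    exact (hr a b).and (measurable_isChain hr (b :: l))

theorem measurable_reflTransGen [Countable V] {r : Ω → V → V → Prop}
    (hr : ∀ a b, Measurable fun ω => r ω a b) (a b : V) :
    Measurable fun ω => Relation.ReflTransGen (r ω) a b := by
  have chain_iff : ∀ ω, Relation.ReflTransGen (r ω) a b ↔
      ∃ l : List V, (a :: l).IsChain (r ω) ∧ (a :: l).getLast (List.cons_ne_nil _ _) = b :=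
    fun ω => ⟨List.exists_isChain_cons_of_relationReflTransGen,
      fun ⟨l, hl, hlast⟩ => List.relationReflTransGen_of_exists_isChain_cons l hl hlast⟩
  simp_rw [chain_iff]
  exact .exists fun l => (measurable_isChain hr _).and measurable_const

theorem measurable_setOf_finite [Countable V] {p : Ω → V → Prop}
    (hp : ∀ v, Measurable fun ω => p ω v) :
    Measurable fun ω => {v | p ω v}.Finite := by
  have finset_iff : ∀ ω, {v | p ω v}.Finite ↔ ∃ T : Finset V, ∀ v, p ω v → v ∈ T :=
    fun ω => ⟨fun h => ⟨h.toFinset, fun v hv => h.mem_toFinset.mpr hv⟩,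
      fun ⟨T, hT⟩ => T.finite_toSet.subset hT⟩
  simp_rw [finset_iff]
  exact .exists fun T => .forall fun v => (hp v).imp measurable_const

end Measurability

def backbone {d : ℕ} (η : DConfig d) : Set (Vtx d) :=
  {x | (bwdCluster η x).Infinite}

section Lattice

variable {d : ℕ} {η : DConfig d}

theorem dist1_self (x : Vtx d) : dist1 x x = 0 := by
  simp [dist1]

theorem dist1_add_right (x y z : Vtx d) : dist1 (x + z) (y + z) = dist1 x y := by
  simp [dist1]

theorem abs_sub_le_dist1 (x y : Vtx d) (i : Fin d) : |x i - y i| ≤ dist1 x y :=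
  Finset.single_le_sum (f := fun j => |x j - y j|) (fun _ _ => abs_nonneg _) (Finset.mem_univ i)

theorem DEdge.ne {x y : Vtx d} (h : DEdge η x y) : x ≠ y := by
  rintro rfl
  simp [DEdge, dist1_self] at h

theorem finite_setOf_dEdge (η : DConfig d) (x : Vtx d) : {y | DEdge η y x}.Finite := by
  refine (Set.finite_Icc (x - 1) (x + 1)).subset fun y hy => ?_
  have hclose i := abs_le.mp ((abs_sub_le_dist1 y x i).trans_eq hy.1)
  constructor <;> intro i <;> simp only [Pi.sub_apply, Pi.add_apply, Pi.one_apply] <;>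
    linarith [hclose i]

theorem dEdge_shiftD (z : Vtx d) (η : DConfig d) :
    DEdge (shiftD z η) = (DEdge η on Equiv.addRight z) := by
  ext x y
  simp [DEdge, shiftD, dist1_add_right, Function.onFun]

theorem mem_backbone_shiftD {z x : Vtx d} :
    x ∈ backbone (shiftD z η) ↔ x + z ∈ backbone η := by
  have hcluster : bwdCluster (shiftD z η) x = Equiv.addRight z ⁻¹' bwdCluster η (x + z) := by
    ext y
    change Reaches (shiftD z η) y x ↔ Reaches η (y + z) (x + z)
    rw [Reaches, dEdge_shiftD, Relation.reflTransGen_onFun_equiv]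
    rfl
  change (bwdCluster (shiftD z η) x).Infinite ↔ (bwdCluster η (x + z)).Infinite
  rw [hcluster]
  exact ⟨fun h hfin => h (hfin.preimage (Equiv.injective _).injOn),
    fun h => h.preimage ((Equiv.surjective _).range_eq ▸ subset_univ _)⟩

theorem mapsTo_backbone {f : Vtx d → Vtx d} (hf : ∀ x, DEdge η x (f x)) :
    MapsTo f (backbone η) (backbone η) :=
  fun x hx => hx.mono fun _ hy => Relation.ReflTransGen.tail hy (hf x)

theorem exists_dEdge_mem_backbone {x : Vtx d} (hx : x ∈ backbone η) :
    ∃ y, DEdge η y x ∧ y ∈ backbone η :=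
  Relation.exists_rel_infinite_of_infinite (finite_setOf_dEdge η x) hx

theorem measurable_dEdge (x y : Vtx d) : Measurable fun η : DConfig d => DEdge η x y :=
  measurable_const.and (Measurable.eq_const (by fun_prop) true)

theorem measurable_mem_backbone (x : Vtx d) : Measurable fun η : DConfig d => x ∈ backbone η :=
  (measurable_setOf_finite fun y => measurable_reflTransGen measurable_dEdge y x).not

end Lattice

section Backbone

variable {d : ℕ}

theorem backbone_weakComponent_eq_empty_or_line {η : DConfig d}
    (hout : ∀ x : Vtx d, ∃! y, DEdge η x y)
    (hasymm : ∀ x y : Vtx d, ¬ (DEdge η x y ∧ DEdge η y x))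
    (hacyc : (SimpleGraph.fromRel (DEdge η)).IsAcyclic)
    (hpred : ∀ x, {y | DEdge η y x ∧ y ∈ backbone η}.Subsingleton) (x : Vtx d) :
    {y | WeakConn η x y ∧ (bwdCluster η y).Infinite} = ∅ ∨
      ∃ γ : ℤ → Vtx d, Injective γ ∧
        range γ = {y | WeakConn η x y ∧ (bwdCluster η y).Infinite} ∧
        ∀ i : ℤ, DEdge η (γ i) (γ (i + 1)) := by
  choose f hf hfu using hout
  have hdedge : ∀ a b, DEdge η a b ↔ b = f a := fun a b => ⟨hfu a b, fun h => h ▸ hf a⟩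
  have hper : periodicPts f = ∅ := by
    refine eq_empty_of_forall_notMem fun a ha => hasymm a (f a) ⟨hf a, (hdedge _ _).2 ?_⟩
    have hadj : ∀ v, (SimpleGraph.fromRel (DEdge η)).Adj v (f v) :=
      fun v => (SimpleGraph.fromRel_adj _ _ _).2 ⟨(hf v).ne, .inl (hf v)⟩
    have hret := iterate_minimalPeriod (f := f) (x := a)
    rw [hacyc.minimalPeriod_eq_two hadj ha] at hret
    exact hret.symm
  have hbij : BijOn f (backbone η) (backbone η) := by
    refine ⟨mapsTo_backbone hf, fun a ha b hb hab => ?_, fun b hb => ?_⟩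
    · exact hpred (f a) ⟨hf a, ha⟩ ⟨(hdedge b (f a)).2 hab, hb⟩
    · obtain ⟨a, hab, ha⟩ := exists_dEdge_mem_backbone hb
      exact ⟨a, ha, ((hdedge a b).1 hab).symm⟩
  have hweak : ∀ a b, WeakConn η a b ↔ ∃ m n, f^[m] a = f^[n] b := by
    have hU : UAdj η = fun a b => b = f a ∨ a = f b := by
      ext a b
      simp only [UAdj, hdedge]
    intro a b
    rw [WeakConn, hU]
    exact reflTransGen_iff_exists_iterate_eq
  rcases eq_empty_or_nonempty {y | WeakConn η x y ∧ (bwdCluster η y).Infinite} with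
    h | ⟨y₀, hxy₀, hy₀⟩
  · exact .inl h
  obtain ⟨γ, hinj, hrange, hstep⟩ := exists_injective_orbit_of_bijOn hper hbij hy₀
  refine .inr ⟨γ, hinj, hrange.trans ?_, fun i => (hdedge _ _).2 (hstep i)⟩
  have hy₀x : WeakConn η y₀ x := by
    obtain ⟨m, n, h⟩ := (hweak x y₀).1 hxy₀
    exact (hweak y₀ x).2 ⟨n, m, h.symm⟩
  ext y
  change y ∈ backbone η ∧ _ ↔ WeakConn η x y ∧ y ∈ backbone η
  rw [and_comm, ← hweak]
  exact and_congr_left' ⟨hxy₀.trans, hy₀x.trans⟩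

theorem lintegral_tsum_mass_transport {ν : Measure (DConfig d)}
    (hinv : ∀ z : Vtx d, MeasurePreserving (shiftD z) ν ν)
    {F : Vtx d → Vtx d → DConfig d → ℝ≥0∞} (hF : ∀ x y, Measurable (F x y))
    (hcov : ∀ z x y η, F x y (shiftD z η) = F (x + z) (y + z) η) (x : Vtx d) :
    ∫⁻ η, ∑' y, F x y η ∂ν = ∫⁻ η, ∑' y, F y x η ∂ν := by
  rw [lintegral_tsum fun y => (hF x y).aemeasurable,
    lintegral_tsum fun y => (hF y x).aemeasurable, ← (Equiv.subLeft (x + x)).tsum_eq]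
  refine tsum_congr fun y => ?_
  rw [← (hinv (x - y)).lintegral_comp (hF y x)]
  simp only [hcov, Equiv.subLeft_apply]
  rw [show y + (x - y) = x by abel, show x + (x - y) = x + x - y by abel]

theorem ae_subsingleton_backbone_pred {ν : Measure (DConfig d)} [IsFiniteMeasure ν]
    (hinv : ∀ z : Vtx d, MeasurePreserving (shiftD z) ν ν)
    (hout : ∀ᵐ η ∂ν, ∀ x : Vtx d, ∃! y, DEdge η x y) :
    ∀ᵐ η ∂ν, ∀ x, {y | DEdge η y x ∧ y ∈ backbone η}.Subsingleton := by
  classical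
  refine ae_all_iff.2 fun x => ?_
  let F : Vtx d → Vtx d → DConfig d → ℝ≥0∞ :=
    fun u v => {η | DEdge η u v ∧ u ∈ backbone η}.indicator 1
  let inBackbone : DConfig d → ℝ≥0∞ := {η | x ∈ backbone η}.indicator 1
  have hF : ∀ u v, Measurable (F u v) := fun u v =>
    measurable_one.indicator ((measurable_dEdge u v).and (measurable_mem_backbone u)).setOf
  have hcov : ∀ z u v η, F u v (shiftD z η) = F (u + z) (v + z) η := by
    intro z u v η
    simp only [F, indicator_apply, mem_ofPred_eq, dEdge_shiftD, onFun, Equiv.coe_addRight,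
      mem_backbone_shiftD, Pi.one_apply]
  have hout_eq : (fun η => ∑' y, F x y η) =ᵐ[ν] inBackbone := by
    filter_upwards [hout] with η hη
    obtain ⟨w, hw, hwu⟩ := hη x
    rw [tsum_eq_single w fun y hy => indicator_of_notMem (fun h => hy (hwu y h.1)) _]
    simp [inBackbone, indicator_apply, hw]
  have hle : inBackbone ≤ fun η => ∑' y, F y x η := by
    intro η
    by_cases hx : x ∈ backbone η
    · obtain ⟨y, hy, hyB⟩ := exists_dEdge_mem_backbone hx
      calc inBackbone η = F y x η := by simp [inBackbone, F, hx, hy, hyB]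
        _ ≤ _ := ENNReal.le_tsum y
    · simp [inBackbone, hx]
  have hin_eq : inBackbone =ᵐ[ν] fun η => ∑' y, F y x η := by
    refine ae_eq_of_ae_le_of_lintegral_le (.of_forall hle) ?_
      (Measurable.tsum fun y => hF y x).aemeasurable ?_
    · rw [lintegral_indicator_one (measurable_mem_backbone x).setOf]
      exact measure_ne_top ν _
    · rw [← lintegral_tsum_mass_transport hinv hF hcov x, lintegral_congr_ae hout_eq]
  filter_upwards [hin_eq] with η hη
  have hcount : ∑' y, F y x η = {y | DEdge η y x ∧ y ∈ backbone η}.encard :=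
    (tsum_subtype _ 1).symm.trans (ENNReal.tsum_set_one _)
  rw [← encard_le_one_iff_subsingleton, ← ENat.toENNReal_le, ENat.toENNReal_one, ← hcount, ← hη]
  exact indicator_apply_le' (fun _ => le_rfl) fun _ => zero_le_one

end Backbone

theorem stmt0_general (d : ℕ)
    (ν : Measure (DConfig d)) [IsProbabilityMeasure ν]
    (hinv : ∀ z : Vtx d, MeasurePreserving (shiftD z) ν ν)
    (hgood : ∀ᵐ η ∂ν,
      (∀ x : Vtx d, ∃! y : Vtx d, DEdge η x y) ∧
      (∀ x y : Vtx d, ¬ (DEdge η x y ∧ DEdge η y x)) ∧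
      (SimpleGraph.fromRel (DEdge η)).IsAcyclic) :
    ∀ᵐ η ∂ν, ∀ x : Vtx d,
      {y | WeakConn η x y ∧ (bwdCluster η y).Infinite} = ∅ ∨
      ∃ γ : ℤ → Vtx d, Function.Injective γ ∧
        Set.range γ = {y | WeakConn η x y ∧ (bwdCluster η y).Infinite} ∧
        ∀ i : ℤ, DEdge η (γ i) (γ (i + 1)) := by
  filter_upwards [hgood, ae_subsingleton_backbone_pred hinv (hgood.mono fun _ h => h.1)]
    with η ⟨hout, hasymm, hacyc⟩ hpred
  exact backbone_weakComponent_eq_empty_or_line hout hasymm hacyc hpred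

/-- for a translation-invariant probability measure on directed
nearest-neighbor configurations on `ℤ^d` whose graph a.s. has out-degree one and is
undirected-acyclic, a.s. the backbone of every weak component is either empty or a
doubly-infinite directed path. -/
theorem stmt0 (d : ℕ) (hd : 1 ≤ d)
    (ν : Measure (DConfig d)) [IsProbabilityMeasure ν]
    (hinv : ∀ z : Vtx d, MeasurePreserving (shiftD z) ν ν)
    (hgood : ∀ᵐ η ∂ν,
      (∀ x : Vtx d, ∃! y : Vtx d, DEdge η x y) ∧
      (∀ x y : Vtx d, ¬ (DEdge η x y ∧ DEdge η y x)) ∧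
      (SimpleGraph.fromRel (DEdge η)).IsAcyclic) :
    ∀ᵐ η ∂ν, ∀ x : Vtx d,
      {y | WeakConn η x y ∧ (bwdCluster η y).Infinite} = ∅ ∨
      ∃ γ : ℤ → Vtx d, Function.Injective γ ∧
        Set.range γ = {y | WeakConn η x y ∧ (bwdCluster η y).Infinite} ∧
        ∀ i : ℤ, DEdge η (γ i) (γ (i + 1)) :=
  stmt0_general d ν hinv hgood
end

section
/- Let V be a set and let G be a directed graph on V in which every vertex has at most one out-neighbor. Let n ≥ 1 and let v_0, v_1, …, v_n be distinct vertices such that for every 0 ≤ i < n at least one of ⟨v_i, v_{i+1}⟩, ⟨v_{i+1}, v_i⟩ is a directed edge of G. Then there exists j ∈ {0, 1, …, n} such that ⟨v_i, v_{i+1}⟩ is a directed edge of G for every i < j, and ⟨v_{i+1}, v_i⟩ is a directed edge of G for every i with j ≤ i < n; that is, all edges of the path are oriented toward the single vertex v_j. -/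
/-- in a directed graph in which every vertex has at most one out-neighbor,
any undirected path on distinct vertices has all its edges oriented toward a single
vertex `v j`. -/
theorem stmt5 {V : Type*} (G : V → V → Prop)
    (hirr : ∀ x : V, ¬ G x x)
    (hout : ∀ x y z : V, G x y → G x z → y = z)
    (n : ℕ) (hn : 1 ≤ n) (v : ℕ → V)
    (hinj : ∀ i j : ℕ, i ≤ n → j ≤ n → v i = v j → i = j)
    (hpath : ∀ i : ℕ, i < n → (G (v i) (v (i + 1)) ∨ G (v (i + 1)) (v i))) :
    ∃ j : ℕ, j ≤ n ∧ (∀ i : ℕ, i < j → G (v i) (v (i + 1))) ∧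
      ∀ i : ℕ, j ≤ i → i < n → G (v (i + 1)) (v i) := by
  by_cases h : ∃ i, i < n ∧ G (v (i + 1)) (v i)
  · classical
    set j := Nat.find h with hjdef
    obtain ⟨hjn, hjP⟩ : j < n ∧ G (v (j + 1)) (v j) := Nat.find_spec h
    refine ⟨j, le_of_lt hjn, ?_, ?_⟩
    · intro i hij
      have hin : i < n := lt_trans hij hjn
      rcases hpath i hin with hf | hb
      · exact hf
      · exact absurd ⟨hin, hb⟩ (Nat.find_min h hij)
    · have key : ∀ i, j ≤ i → i < n → G (v (i + 1)) (v i) := by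
        intro i hji
        induction i, hji using Nat.le_induction with
        | base => intro _; exact hjP
        | succ i hji ih =>
          intro hin1
          have hin : i < n := lt_trans (Nat.lt_succ_self i) hin1
          have hPi := ih hin
          rcases hpath (i + 1) hin1 with hf | hb
          · exfalso
            have := hout (v (i + 1)) (v i) (v (i + 2)) hPi hf
            have := hinj i (i + 2) (le_of_lt hin) hin1 this
            omega
          · exact hb
      exact key
  · refine ⟨n, le_refl n, ?_, ?_⟩
    · intro i hin
      rcases hpath i hin with hf | hb
      · exact hf
      · exact absurd ⟨i, hin, hb⟩ h
    · intro i h1 h2; omega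
end

section
/- Let G be a directed graph on a set V such that every vertex has exactly one out-neighbor (given by a map f : V → V with f(x) ≠ x for all x), no two vertices carry directed edges in both directions, and the underlying undirected graph of G contains no cycle. Suppose a vertex x has two distinct in-neighbors y and z (so ⟨y,x⟩ and ⟨z,x⟩ are directed edges) whose backward clusters C^b_y and C^b_z are both infinite. Then the three sets C^b_y, C^b_z, and the forward orbit O = {f^{(n)}(x) : n ≥ 1} are pairwise disjoint infinite sets, and no two of these three sets are joined by a path in the underlying undirected graph that avoids the vertex x; in particular, the weak component of x is infinite and deleting x from it leaves at least three distinct infinite connected components (x is an encounter point). -/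
/-!
Since every vertex has out-degree one, directed reachability is iteration of `f`. A periodic
orbit of `f` would be a cycle of the underlying graph (its length is at least three because
there are no loops and no bidirectional edges), so `f` has no periodic points and
`n ↦ f^[n] u` is injective. Now fix an in-neighbour `v` of `x` and consider the vertices whose
forward orbit reaches `v` before meeting `x`. This property is preserved along every undirected
edge not incident to `x`. It holds on `C^b_v`, while by injectivity no forward orbit starting
in the forward orbit of `x`, or in `C^b_w` for another in-neighbour `w` of `x`, ever reaches `v`.
-/

open Function Relation SimpleGraph

section

variable {V : Type*} {f : V → V}

theorem SimpleGraph.Reachable.iterate {K : SimpleGraph V} {u : V} {k : ℕ}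
    (h : ∀ i < k, K.Adj (f^[i] u) (f^[i + 1] u)) : K.Reachable u (f^[k] u) := by
  induction k with
  | zero => rfl
  | succ k ih => exact (ih fun i hi => h i (by omega)).trans (h k k.lt_succ_self).reachable

theorem periodicPts_eq_empty_of_isAcyclic {H : SimpleGraph V} (hH : H.IsAcyclic)
    (hadj : ∀ a, H.Adj a (f a)) (h2 : ∀ a, f (f a) ≠ a) : periodicPts f = ∅ := by
  refine Set.eq_empty_of_forall_notMem fun u hu => ?_
  set p := minimalPeriod f u
  have hp : f^[p] u = u := isPeriodicPt_minimalPeriod f u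
  have hp0 : 0 < p := minimalPeriod_pos_of_mem_periodicPts hu
  have hp1 : p ≠ 1 := fun h => (hadj u).ne (by simpa [h] using hp.symm)
  have hp2 : p ≠ 2 := fun h => h2 u (by simpa [h] using hp)
  have hinj {m n : ℕ} (hm : m < p) (hn : n < p) : f^[m] u = f^[n] u ↔ m = n :=
    iterate_eq_iterate_iff_of_lt_minimalPeriod hm hn
  have hclose : H.Adj u (f^[p - 1] u) := by
    have := hadj (f^[p - 1] u)
    rwa [← iterate_succ_apply' f, Nat.succ_eq_add_one, Nat.sub_add_cancel hp0, hp,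
      H.adj_comm] at this
  -- the rest of the orbit joins `u` to `f^[p - 1] u` without the closing edge
  have hpath : (H.deleteEdges {s(u, f^[p - 1] u)}).Reachable u (f^[p - 1] u) := by
    refine Reachable.iterate fun i hi => ?_
    rw [deleteEdges_adj, Set.mem_singleton_iff, Sym2.eq_iff, iterate_succ_apply']
    refine ⟨hadj _, ?_⟩
    rintro (⟨h0, h1⟩ | ⟨h0, -⟩)
    · obtain rfl : i = 0 := (hinj (n := 0) (by omega) hp0).mp h0
      exact hp2 (by have := (hinj (m := 1) (by omega) (by omega)).mp h1; omega)
    · exact absurd ((hinj (by omega) (by omega)).mp h0) (by omega)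
  exact isAcyclic_iff_forall_adj_isBridge.mp hH hclose hpath

theorem iterate_injective_of_periodicPts_eq_empty (h : periodicPts f = ∅) (u : V) :
    Injective (f^[·] u) := by
  intro m n hmn
  by_contra hne
  wlog hlt : m < n generalizing m n
  · exact this hmn.symm (Ne.symm hne) (by omega)
  have hper : IsPeriodicPt f (n - m) (f^[m] u) := by
    rw [IsPeriodicPt, IsFixedPt, ← iterate_add_apply, Nat.sub_add_cancel hlt.le]
    exact hmn.symm
  simpa [h] using mk_mem_periodicPts (by omega) hper

theorem reflTransGen_iff_exists_iterate {u v : V} :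
    ReflTransGen (fun a b => b = f a) u v ↔ ∃ n, f^[n] u = v := by
  constructor
  · intro h
    induction h with
    | refl => exact ⟨0, rfl⟩
    | tail _ hstep ih =>
      obtain ⟨n, rfl⟩ := ih
      exact ⟨n + 1, by rw [iterate_succ_apply', hstep]⟩
  · rintro ⟨n, rfl⟩
    induction n with
    | zero => exact .refl
    | succ n ih => exact ih.tail (iterate_succ_apply' f n u)

theorem iterate_ne_of_reflTransGen_of_apply_eq {u v w : V} (hinj : Injective (f^[·] u))
    (hvw : v ≠ w) (hf : f v = f w) (hu : ReflTransGen (fun a b => b = f a) u v) (n : ℕ) :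
    f^[n] u ≠ w := by
  intro hw
  obtain ⟨m, hv⟩ := reflTransGen_iff_exists_iterate.mp hu
  have : f^[m + 1] u = f^[n + 1] u := by simp only [iterate_succ_apply', hv, hw, hf]
  exact hvw (hv ▸ hw ▸ congrArg (f^[·] u) (Nat.succ_injective (hinj this)))

theorem iterate_iterate_ne_of_apply_eq {x v : V} (hinj : Injective (f^[·] x)) (hv : f v = x)
    (m n : ℕ) : f^[m] (f^[n] x) ≠ v := fun h =>
  (m + n).succ_ne_zero <| hinj (by simp only [iterate_succ_apply', iterate_add_apply, h, hv,
    iterate_zero_apply])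

def ReachesAvoiding (f : V → V) (x u v : V) : Prop :=
  ∃ n, f^[n] u = v ∧ ∀ i ≤ n, f^[i] u ≠ x

namespace ReachesAvoiding

variable {x u v : V}

theorem of_apply (hu : u ≠ x) (h : ReachesAvoiding f x (f u) v) : ReachesAvoiding f x u v := by
  obtain ⟨n, hn, havoid⟩ := h
  refine ⟨n + 1, by rwa [iterate_succ_apply], fun i hi => ?_⟩
  rcases i with _ | i
  · exact hu
  · rw [iterate_succ_apply]
    exact havoid i (by omega)

theorem apply (hv : f v = x) (hu : f u ≠ x) (h : ReachesAvoiding f x u v) :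
    ReachesAvoiding f x (f u) v := by
  obtain ⟨_ | n, hn, havoid⟩ := h
  · exact absurd (by rw [← hv, ← hn]; rfl) hu
  · refine ⟨n, by rwa [← iterate_succ_apply], fun i hi => ?_⟩
    rw [← iterate_succ_apply]
    exact havoid (i + 1) (by omega)

theorem of_reflTransGen (hv : f v = x) {w : V}
    (hpath : ReflTransGen (fun a b => (b = f a ∨ a = f b) ∧ a ≠ x ∧ b ≠ x) u w)
    (h : ReachesAvoiding f x u v) : ReachesAvoiding f x w v := by
  induction hpath with
  | refl => exact h
  | tail _ hstep ih =>
    obtain ⟨rfl | rfl, ha, hb⟩ := hstep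
    · exact ih.apply hv hb
    · exact ih.of_apply hb

theorem iff_reflTransGen (hinj : Injective (f^[·] u)) (hv : f v = x) :
    ReachesAvoiding f x u v ↔ ReflTransGen (fun a b => b = f a) u v := by
  rw [reflTransGen_iff_exists_iterate]
  refine ⟨fun ⟨n, hn, _⟩ => ⟨n, hn⟩, fun ⟨n, hn⟩ => ⟨n, hn, fun i hi hx => ?_⟩⟩
  have : f^[n + 1] u = f^[i] u := by rw [iterate_succ_apply', hn, hv, hx]
  exact absurd (hinj this) (by omega)

theorem inter_eq_empty_and_not_reflTransGen (hv : f v = x) {P Q : Set V}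
    (hP : ∀ u ∈ P, ReachesAvoiding f x u v) (hQ : ∀ w ∈ Q, ∀ n, f^[n] w ≠ v) :
    P ∩ Q = ∅ ∧ ∀ u ∈ P, ∀ w ∈ Q,
      ¬ ReflTransGen (fun a b => (b = f a ∨ a = f b) ∧ a ≠ x ∧ b ≠ x) u w := by
  have hsep : ∀ u ∈ P, ∀ w ∈ Q,
      ¬ ReflTransGen (fun a b => (b = f a ∨ a = f b) ∧ a ≠ x ∧ b ≠ x) u w := by
    intro u hu w hw hpath
    obtain ⟨n, hn, -⟩ := (hP u hu).of_reflTransGen hv hpath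
    exact hQ w hw n hn
  exact ⟨Set.eq_empty_of_forall_notMem fun u ⟨hu, hw⟩ => hsep u hu u hw .refl, hsep⟩

end ReachesAvoiding

end

open ReachesAvoiding

/-- in a directed graph with out-degree exactly one (given by `f`), no
bidirectional pairs, and acyclic underlying undirected graph, a vertex `x` with two
distinct in-neighbors having infinite backward clusters is an encounter point: the two
backward clusters and the forward orbit of `x` are pairwise disjoint infinite sets, no
two of which are joined by an undirected path avoiding `x`; in particular the weak
component of `x` is infinite. -/
theorem stmt6 {V : Type*} (G : V → V → Prop) (f : V → V)
    (hf : ∀ x : V, f x ≠ x)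
    (hG : ∀ x y : V, G x y ↔ y = f x)
    (hnobi : ∀ x y : V, G x y → ¬ G y x)
    (hacyc : (SimpleGraph.fromRel G).IsAcyclic)
    (x y z : V) (hyz : y ≠ z) (hyx : G y x) (hzx : G z x)
    (hyinf : {u : V | Relation.ReflTransGen G u y}.Infinite)
    (hzinf : {u : V | Relation.ReflTransGen G u z}.Infinite) :
    -- the three sets are pairwise disjoint ...
    ({u : V | Relation.ReflTransGen G u y} ∩ {u : V | Relation.ReflTransGen G u z} = ∅ ∧
     {u : V | Relation.ReflTransGen G u y} ∩ {u : V | ∃ n : ℕ, 1 ≤ n ∧ f^[n] x = u} = ∅ ∧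
     {u : V | Relation.ReflTransGen G u z} ∩ {u : V | ∃ n : ℕ, 1 ≤ n ∧ f^[n] x = u} = ∅) ∧
    -- ... infinite sets ...
    ({u : V | Relation.ReflTransGen G u y}.Infinite ∧
     {u : V | Relation.ReflTransGen G u z}.Infinite ∧
     {u : V | ∃ n : ℕ, 1 ≤ n ∧ f^[n] x = u}.Infinite) ∧
    ((∀ u ∈ {u : V | Relation.ReflTransGen G u y}, ∀ w ∈ {u : V | Relation.ReflTransGen G u z},
        ¬ Relation.ReflTransGen (fun a b => (G a b ∨ G b a) ∧ a ≠ x ∧ b ≠ x) u w) ∧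
     (∀ u ∈ {u : V | Relation.ReflTransGen G u y}, ∀ w ∈ {u : V | ∃ n : ℕ, 1 ≤ n ∧ f^[n] x = u},
        ¬ Relation.ReflTransGen (fun a b => (G a b ∨ G b a) ∧ a ≠ x ∧ b ≠ x) u w) ∧
     (∀ u ∈ {u : V | Relation.ReflTransGen G u z}, ∀ w ∈ {u : V | ∃ n : ℕ, 1 ≤ n ∧ f^[n] x = u},
        ¬ Relation.ReflTransGen (fun a b => (G a b ∨ G b a) ∧ a ≠ x ∧ b ≠ x) u w)) ∧
    -- ... in particular the weak component of `x` is infinite.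
    {u : V | Relation.ReflTransGen (fun a b => G a b ∨ G b a) x u}.Infinite := by
  obtain rfl : G = fun a b => b = f a := funext₂ fun a b => propext (hG a b)
  have hinj : ∀ u, Injective (f^[·] u) := iterate_injective_of_periodicPts_eq_empty <|
    periodicPts_eq_empty_of_isAcyclic hacyc
      (fun a => (fromRel_adj _ _ _).mpr ⟨(hf a).symm, .inl rfl⟩) fun a h => hnobi _ _ rfl h.symm
  have hy : f y = x := hyx.symm
  have hz : f z = x := hzx.symm
  have orbit {v : V} (hv : f v = x) :
      ∀ u ∈ {u : V | ∃ n : ℕ, 1 ≤ n ∧ f^[n] x = u}, ∀ m, f^[m] u ≠ v := by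
    rintro _ ⟨n, -, rfl⟩ m
    exact iterate_iterate_ne_of_apply_eq (hinj x) hv m n
  obtain ⟨hyz_disj, hyz_sep⟩ := inter_eq_empty_and_not_reflTransGen hy
    (fun u => (iff_reflTransGen (hinj u) hy).mpr)
    (fun u => iterate_ne_of_reflTransGen_of_apply_eq (hinj u) hyz.symm (hz.trans hy.symm))
  obtain ⟨hyO_disj, hyO_sep⟩ := inter_eq_empty_and_not_reflTransGen hy
    (fun u => (iff_reflTransGen (hinj u) hy).mpr) (orbit hy)
  obtain ⟨hzO_disj, hzO_sep⟩ := inter_eq_empty_and_not_reflTransGen hz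
    (fun u => (iff_reflTransGen (hinj u) hz).mpr) (orbit hz)
  have hO : {u : V | ∃ n : ℕ, 1 ≤ n ∧ f^[n] x = u}.Infinite :=
    Set.infinite_of_injective_forall_mem ((hinj x).comp (add_left_injective 1))
      fun n => ⟨n + 1, by omega, rfl⟩
  refine ⟨⟨hyz_disj, hyO_disj, hzO_disj⟩, ⟨hyinf, hzinf, hO⟩, ⟨hyz_sep, hyO_sep, hzO_sep⟩,
    hO.mono ?_⟩
  rintro _ ⟨n, -, rfl⟩
  exact ReflTransGen.mono (fun _ _ => Or.inl) _ _
    (reflTransGen_iff_exists_iterate.mpr ⟨n, rfl⟩)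
end

section
/- Let E and S be countable sets, let X = [0,∞)^E and Y = {0,1}^S carry their product topologies, and let (μ_k) and μ be Borel probability measures on X × Y such that μ_k converges weakly to μ. Assume that all μ_k have the same marginal P on X, and that for each e ∈ E the distribution of the coordinate projection t_e under P has no atoms (P(t_e = a) = 0 for every a ∈ [0,∞)). Then for every Borel set U ⊆ X and every cylinder set V ⊆ Y (a set determined by the values of finitely many coordinates of Y), μ_k(U × V) → μ(U × V) as k → ∞. -/
/-!
Testing weak convergence against functions of `x` alone shows that `μ` has marginal `P` too.
Approximate `1_U` in `L¹(P)` by a bounded continuous `g`. Since `V` is clopen, `g(x) 1_V(y)` is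
bounded and continuous, so its integrals converge; and for every measure with marginal `P` the
error `|∫ (1_U(x) - g(x)) 1_V(y)|` is at most `‖1_U - g‖_{L¹(P)}`, uniformly in `k`.
-/

open MeasureTheory Filter Set Topology TopologicalSpace BoundedContinuousFunction
open scoped NNReal

lemma tendsto_of_forall_approx {ι : Type*} {l : Filter ι} {x : ι → ℝ} {a : ℝ}
    (h : ∀ ε > 0, ∃ (y : ι → ℝ) (b : ℝ),
      Tendsto y l (𝓝 b) ∧ (∀ i, |x i - y i| ≤ ε) ∧ |a - b| ≤ ε) :
    Tendsto x l (𝓝 a) := by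
  refine Metric.tendsto_nhds.2 fun ε hε => ?_
  obtain ⟨y, b, hyb, hxy, hab⟩ := h (ε / 3) (by positivity)
  filter_upwards [Metric.tendsto_nhds.1 hyb (ε / 3) (by positivity)] with i hi
  rw [Real.dist_eq] at hi ⊢
  have := abs_le.1 (hxy i)
  have := abs_le.1 hab
  have := abs_lt.1 hi
  rw [abs_lt]
  constructor <;> linarith

section Cylinder

variable {S α : Type*} {F : Finset S}

lemma cylinder_restrict_image_eq {V : Set (S → α)}
    (hF : ∀ η η' : S → α, (∀ s ∈ F, η s = η' s) → (η ∈ V ↔ η' ∈ V)) :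
    cylinder F (F.restrict '' V) = V := by
  ext η
  refine ⟨fun ⟨η', hη', heq⟩ => (hF η' η fun s hs => congrFun heq ⟨s, hs⟩).1 hη',
    fun hη => ⟨η, hη, rfl⟩⟩

lemma isClopen_cylinder [TopologicalSpace α] [DiscreteTopology α] (W : Set (F → α)) :
    IsClopen (cylinder (α := fun _ => α) F W) :=
  (isClopen_discrete W).preimage (Finset.continuous_restrict F)

lemma measurableSet_cylinder [MeasurableSpace α] [MeasurableSingletonClass α] [Countable α]
    (W : Set (F → α)) : MeasurableSet (cylinder (α := fun _ => α) F W) :=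
  .cylinder F W.to_countable.measurableSet

end Cylinder

section Marginal

variable {ι X Y : Type*} [MeasurableSpace X] [MeasurableSpace Y] {l : Filter ι}
  {μs : ι → Measure (X × Y)} {μ : Measure (X × Y)} {P : Measure X}

lemma map_fst_eq_of_tendsto_integral [TopologicalSpace X] [TopologicalSpace Y]
    [HasOuterApproxClosed X] [BorelSpace X] [l.NeBot] [IsFiniteMeasure μ] [IsFiniteMeasure P]
    (hmarg : ∀ i, (μs i).map Prod.fst = P)
    (hweak : ∀ f : X × Y →ᵇ ℝ, Tendsto (fun i => ∫ p, f p ∂μs i) l (𝓝 (∫ p, f p ∂μ))) :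
    μ.map Prod.fst = P := by
  refine ext_of_forall_integral_eq_of_IsFiniteMeasure fun f => ?_
  have integral_map_fst (ν : Measure (X × Y)) : ∫ x, f x ∂ν.map Prod.fst = ∫ p, f p.1 ∂ν :=
    integral_map measurable_fst.aemeasurable f.continuous.aestronglyMeasurable
  refine (integral_map_fst μ).trans (tendsto_nhds_unique
    (hweak (f.compContinuous ⟨Prod.fst, continuous_fst⟩)) ?_)
  exact tendsto_const_nhds.congr fun i => by rw [← hmarg i, integral_map_fst]; rfl

lemma abs_integral_mul_le_of_map_fst_eq {ν : Measure (X × Y)} (hν : ν.map Prod.fst = P)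
    {φ : X → ℝ} (hφ : Integrable φ P) {b : Y → ℝ} (hb : ∀ y, |b y| ≤ 1) :
    |∫ p, φ p.1 * b p.2 ∂ν| ≤ ∫ x, |φ x| ∂P := by
  have hφν : Integrable (fun p => φ p.1) ν := by
    rw [← hν] at hφ
    exact hφ.comp_measurable measurable_fst
  calc |∫ p, φ p.1 * b p.2 ∂ν| = ‖∫ p, φ p.1 * b p.2 ∂ν‖ := (Real.norm_eq_abs _).symm
    _ ≤ ∫ p, |φ p.1| ∂ν :=
        norm_integral_le_of_norm_le hφν.abs (.of_forall fun p => by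
          simpa [abs_mul] using mul_le_of_le_one_right (abs_nonneg (φ p.1)) (hb p.2))
    _ = ∫ x, |φ x| ∂P := by
        rw [← hν, integral_map measurable_fst.aemeasurable (hν ▸ hφ.abs.aestronglyMeasurable)]

lemma abs_integral_indicator_prod_sub_le [TopologicalSpace X] [OpensMeasurableSpace X]
    {ν : Measure (X × Y)} [IsFiniteMeasure ν] [IsFiniteMeasure P] (hν : ν.map Prod.fst = P)
    {U : Set X} (hU : MeasurableSet U) {V : Set Y} (hV : MeasurableSet V) (g : X →ᵇ ℝ) :
    |∫ p, (U ×ˢ V).indicator 1 p ∂ν - ∫ p, g p.1 * V.indicator 1 p.2 ∂ν| ≤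
      ∫ x, |U.indicator 1 x - g x| ∂P := by
  have hUVint : Integrable ((U ×ˢ V).indicator 1) ν :=
    (integrable_const (1 : ℝ)).indicator (hU.prod hV)
  have hgVint : Integrable (fun p => g p.1 * V.indicator 1 p.2) ν :=
    .of_bound ((g.continuous.measurable.comp measurable_fst).mul
      ((measurable_const.indicator hV).comp measurable_snd)).aestronglyMeasurable ‖g‖
      (.of_forall fun p => by
        by_cases hp : p.2 ∈ V <;> simp [hp, -Real.norm_eq_abs, g.norm_coe_le_norm])
  have hUint : Integrable (U.indicator 1) P := (integrable_const (1 : ℝ)).indicator hU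
  have hfactor : (fun p => (U ×ˢ V).indicator 1 p - g p.1 * V.indicator 1 p.2) =
      fun p : X × Y => (U.indicator 1 p.1 - g p.1) * V.indicator 1 p.2 := by
    funext ⟨x, y⟩
    rw [Set.indicator_prod_one, sub_mul]
  rw [← integral_sub hUVint hgVint, hfactor]
  exact abs_integral_mul_le_of_map_fst_eq hν (hUint.sub (g.integrable P)) fun y => by
    by_cases hy : y ∈ V <;> simp [hy]

theorem tendsto_measure_prod_of_map_fst_eq [TopologicalSpace X] [PseudoMetrizableSpace X]
    [BorelSpace X] [TopologicalSpace Y] [∀ i, IsFiniteMeasure (μs i)] [IsFiniteMeasure μ]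
    [IsFiniteMeasure P] (hmarg : ∀ i, (μs i).map Prod.fst = P) (hμ : μ.map Prod.fst = P)
    (hweak : ∀ f : X × Y →ᵇ ℝ, Tendsto (fun i => ∫ p, f p ∂μs i) l (𝓝 (∫ p, f p ∂μ)))
    {U : Set X} (hU : MeasurableSet U) {V : Set Y} (hVc : IsClopen V) (hVm : MeasurableSet V) :
    Tendsto (fun i => μs i (U ×ˢ V)) l (𝓝 (μ (U ×ˢ V))) := by
  rw [← ENNReal.tendsto_toReal_iff (fun i => measure_ne_top _ _) (measure_ne_top μ _)]
  simp_rw [← measureReal_def, ← integral_indicator_one (hU.prod hVm)]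
  refine tendsto_of_forall_approx fun ε hε => ?_
  have hUint : Integrable (U.indicator 1) P := (integrable_const (1 : ℝ)).indicator hU
  obtain ⟨g, hg, -⟩ := hUint.exists_boundedContinuous_integral_sub_le hε
  have approx (ν : Measure (X × Y)) [IsFiniteMeasure ν] (hν : ν.map Prod.fst = P) :
      |∫ p, (U ×ˢ V).indicator 1 p ∂ν - ∫ p, g p.1 * V.indicator 1 p.2 ∂ν| ≤ ε :=
    (abs_integral_indicator_prod_sub_le hν hU hVm g).trans
      (by simpa only [Real.norm_eq_abs] using hg)
  let ψ : X × Y →ᵇ ℝ := g.compContinuous ⟨Prod.fst, continuous_fst⟩ *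
    (indicator V hVc).compContinuous ⟨Prod.snd, continuous_snd⟩
  exact ⟨_, _, hweak ψ, fun i => approx (μs i) (hmarg i), approx μ hμ⟩

end Marginal

theorem stmt11_general {E S : Type*} [Countable E]
    (μseq : ℕ → Measure ((E → ℝ≥0) × (S → Bool)))
    (μ : Measure ((E → ℝ≥0) × (S → Bool)))
    [∀ k, IsProbabilityMeasure (μseq k)] [IsProbabilityMeasure μ]
    (P : Measure (E → ℝ≥0)) [IsProbabilityMeasure P]
    (hmarg : ∀ k, (μseq k).map Prod.fst = P)
    (hweak : ∀ f : (E → ℝ≥0) × (S → Bool) → ℝ, Continuous f → (∃ C : ℝ, ∀ p, |f p| ≤ C) →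
      Tendsto (fun k => ∫ p, f p ∂(μseq k)) atTop (nhds (∫ p, f p ∂μ))) :
    ∀ U : Set (E → ℝ≥0), MeasurableSet U →
      ∀ V : Set (S → Bool),
        (∃ F : Finset S, ∀ η η' : S → Bool, (∀ s ∈ F, η s = η' s) → (η ∈ V ↔ η' ∈ V)) →
        Tendsto (fun k => μseq k (U ×ˢ V)) atTop (nhds (μ (U ×ˢ V))) := by
  rintro U hU V ⟨F, hF⟩
  have hweak' (f : (E → ℝ≥0) × (S → Bool) →ᵇ ℝ) :
      Tendsto (fun k => ∫ p, f p ∂μseq k) atTop (𝓝 (∫ p, f p ∂μ)) :=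
    hweak f f.continuous ⟨‖f‖, f.norm_coe_le_norm⟩
  rw [← cylinder_restrict_image_eq hF]
  exact tendsto_measure_prod_of_map_fst_eq hmarg (map_fst_eq_of_tendsto_integral hmarg hweak')
    hweak' hU (isClopen_cylinder _) (measurableSet_cylinder _)

/-- if Borel probability measures `μ_k` on `[0,∞)^E × {0,1}^S` (countable
`E`, `S`) converge weakly to `μ`, all `μ_k` share the same marginal `P` on `[0,∞)^E`, and
each coordinate of `P` is atomless, then `μ_k(U × V) → μ(U × V)` for every Borel
`U ⊆ [0,∞)^E` and every cylinder set `V ⊆ {0,1}^S`. -/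
theorem stmt11 {E S : Type*} [Countable E] [Countable S]
    (μseq : ℕ → Measure ((E → ℝ≥0) × (S → Bool)))
    (μ : Measure ((E → ℝ≥0) × (S → Bool)))
    [∀ k, IsProbabilityMeasure (μseq k)] [IsProbabilityMeasure μ]
    (P : Measure (E → ℝ≥0)) [IsProbabilityMeasure P]
    (hmarg : ∀ k, (μseq k).map Prod.fst = P)
    (hweak : ∀ f : (E → ℝ≥0) × (S → Bool) → ℝ, Continuous f → (∃ C : ℝ, ∀ p, |f p| ≤ C) →
      Tendsto (fun k => ∫ p, f p ∂(μseq k)) atTop (nhds (∫ p, f p ∂μ)))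
    (hatomless : ∀ (e : E) (a : ℝ≥0), P {t : E → ℝ≥0 | t e = a} = 0) :
    ∀ U : Set (E → ℝ≥0), MeasurableSet U →
      ∀ V : Set (S → Bool),
        (∃ F : Finset S, ∀ η η' : S → Bool, (∀ s ∈ F, η s = η' s) → (η ∈ V ↔ η' ∈ V)) →
        Tendsto (fun k => μseq k (U ×ˢ V)) atTop (nhds (μ (U ×ˢ V))) :=
  stmt11_general μseq μ P hmarg hweak
end

section
/- Let d ≥ 1 and let t : E^d → [0,∞) be a fixed weight configuration on the nearest-neighbor edges of ℤ^d such that T(0, ℤ^d ∖ [−n,n]^d) → ∞ as n → ∞, where T(x, A) = inf_{y ∈ A} T(x,y). Then for every pair of vertices x, y ∈ ℤ^d there exists a geodesic from x to y: a finite nearest-neighbor path γ from x to y whose passage time T(γ) equals T(x,y). Moreover, γ can be taken to be self-avoiding. -/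
open Filter Classical

/-- `e` is a nearest-neighbor (unordered) edge of `ℤ^d`. -/
def IsNNEdge {d : ℕ} (e : Sym2 (Vtx d)) : Prop :=
  ∃ x y : Vtx d, dist1 x y = 1 ∧ e = s(x, y)

/-- Extend a weight function on nearest-neighbor edges to all unordered pairs by `0`. -/
noncomputable def liftW {d : ℕ} (t : {e : Sym2 (Vtx d) // IsNNEdge e} → ℝ)
    (e : Sym2 (Vtx d)) : ℝ :=
  if h : IsNNEdge e then t ⟨e, h⟩ else 0

/-- `p` is a nearest-neighbor path of `n` steps from `x` to `y`. -/
def IsPath {d : ℕ} (n : ℕ) (p : ℕ → Vtx d) (x y : Vtx d) : Prop :=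
  p 0 = x ∧ p n = y ∧ ∀ i : ℕ, i < n → dist1 (p i) (p (i + 1)) = 1

/-- The passage time of the first `n` steps of `p`. -/
def pathTime {d : ℕ} (w : Sym2 (Vtx d) → ℝ) (n : ℕ) (p : ℕ → Vtx d) : ℝ :=
  ∑ i ∈ Finset.range n, w s(p i, p (i + 1))

/-- The (first-)passage time `T(x,y)`. -/
noncomputable def PT {d : ℕ} (w : Sym2 (Vtx d) → ℝ) (x y : Vtx d) : ℝ :=
  sInf {r : ℝ | ∃ (n : ℕ) (p : ℕ → Vtx d), IsPath n p x y ∧ r = pathTime w n p}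

/-! Fix `x`, `y`, and take `M` so large that `T(0, ℤ^d ∖ [−M,M]^d)` exceeds `T(0,x) + T(x,y) + 1`.
A path from `x` to `y` of passage time below `T(x,y) + 1` then never leaves the box `[−M,M]^d`,
and erasing its loops gives a self-avoiding path in the box that is no slower. There are only
finitely many self-avoiding paths in a finite box, so the infimum `T(x,y)` is attained by one of
them. -/

section Paths

variable {d : ℕ}

lemma pathTime_add (w : Sym2 (Vtx d) → ℝ) (p : ℕ → Vtx d) (j m : ℕ) :
    pathTime w (j + m) p = pathTime w j p + pathTime w m (fun k => p (j + k)) := by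
  simp only [pathTime, Finset.sum_range_add, add_assoc]

lemma pathTime_nonneg {w : Sym2 (Vtx d) → ℝ} (hw : ∀ e, 0 ≤ w e) (n : ℕ) (p : ℕ → Vtx d) :
    0 ≤ pathTime w n p :=
  Finset.sum_nonneg fun _ _ => hw _

lemma pathTime_mono {w : Sym2 (Vtx d) → ℝ} (hw : ∀ e, 0 ≤ w e) (p : ℕ → Vtx d) {k n : ℕ}
    (hkn : k ≤ n) : pathTime w k p ≤ pathTime w n p :=
  Finset.sum_le_sum_of_subset_of_nonneg (Finset.range_subset_range.2 hkn) fun _ _ _ => hw _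

lemma IsPath.take {n k : ℕ} {p : ℕ → Vtx d} {x y : Vtx d} (hp : IsPath n p x y) (hkn : k ≤ n) :
    IsPath k p x (p k) :=
  ⟨hp.1, rfl, fun i hi => hp.2.2 i (by omega)⟩

lemma IsPath.drop {n j : ℕ} {p : ℕ → Vtx d} {x y : Vtx d} (hp : IsPath n p x y) (hjn : j ≤ n) :
    IsPath (n - j) (fun k => p (j + k)) (p j) y :=
  ⟨rfl, by simpa [Nat.add_sub_cancel' hjn] using hp.2.1,
    fun i hi => by simpa [add_assoc] using hp.2.2 (j + i) (by omega)⟩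

lemma isPath_one {x z : Vtx d} (h : dist1 x z = 1) :
    IsPath 1 (fun k => if k = 0 then x else z) x z :=
  ⟨rfl, rfl, fun i hi => by obtain rfl : i = 0 := (by omega); simpa using h⟩

def concatPath (n : ℕ) (p q : ℕ → Vtx d) (k : ℕ) : Vtx d :=
  if k < n then p k else q (k - n)

lemma concatPath_of_le {n k : ℕ} {p q : ℕ → Vtx d} (h : p n = q 0) (hkn : k ≤ n) :
    concatPath n p q k = p k := by
  unfold concatPath
  split_ifs with hk
  · rfl
  · obtain rfl : k = n := by omega
    simp [h]

lemma concatPath_add (n k : ℕ) (p q : ℕ → Vtx d) : concatPath n p q (n + k) = q k := by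
  simp [concatPath]

lemma concatPath_mem {n m : ℕ} {p q : ℕ → Vtx d} {B : Set (Vtx d)} (hp : ∀ k ≤ n, p k ∈ B)
    (hq : ∀ k ≤ m, q k ∈ B) : ∀ k ≤ n + m, concatPath n p q k ∈ B := by
  intro k hk
  unfold concatPath
  split_ifs with h
  · exact hp k h.le
  · exact hq _ (by omega)

lemma IsPath.concat {n m : ℕ} {p q : ℕ → Vtx d} {x z y : Vtx d} (hp : IsPath n p x z)
    (hq : IsPath m q z y) : IsPath (n + m) (concatPath n p q) x y := by
  have hj : p n = q 0 := hp.2.1.trans hq.1.symm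
  refine ⟨(concatPath_of_le hj (Nat.zero_le n)).trans hp.1,
    (concatPath_add n m p q).trans hq.2.1, fun i hi => ?_⟩
  rcases lt_or_ge i n with h | h
  · rw [concatPath_of_le hj h.le, concatPath_of_le hj h]
    exact hp.2.2 i h
  · obtain ⟨k, rfl⟩ := Nat.exists_eq_add_of_le h
    rw [concatPath_add, add_assoc, concatPath_add]
    exact hq.2.2 k (by omega)

lemma pathTime_concatPath (w : Sym2 (Vtx d) → ℝ) {n m : ℕ} {p q : ℕ → Vtx d} (h : p n = q 0) :
    pathTime w (n + m) (concatPath n p q) = pathTime w n p + pathTime w m q := by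
  rw [pathTime_add]
  congr 1
  · refine Finset.sum_congr rfl fun k hk => ?_
    rw [Finset.mem_range] at hk
    rw [concatPath_of_le h hk.le, concatPath_of_le h hk]
  · simp only [pathTime, concatPath_add]

lemma IsPath.shortcut {n i j : ℕ} {p : ℕ → Vtx d} {x y : Vtx d} (hp : IsPath n p x y)
    (hij : i ≤ j) (hjn : j ≤ n) (heq : p i = p j) :
    IsPath (i + (n - j)) (concatPath i p fun k => p (j + k)) x y :=
  (hp.take (hij.trans hjn)).concat (heq ▸ hp.drop hjn)

lemma pathTime_shortcut_le {w : Sym2 (Vtx d) → ℝ} (hw : ∀ e, 0 ≤ w e) {n i j : ℕ}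
    {p : ℕ → Vtx d} (hij : i ≤ j) (hjn : j ≤ n) (heq : p i = p j) :
    pathTime w (i + (n - j)) (concatPath i p fun k => p (j + k)) ≤ pathTime w n p :=
  calc _ = pathTime w i p + pathTime w (n - j) (fun k => p (j + k)) :=
        pathTime_concatPath w (by simpa using heq)
    _ ≤ pathTime w j p + pathTime w (n - j) (fun k => p (j + k)) := by
        gcongr
        exact pathTime_mono hw p hij
    _ = pathTime w n p := by rw [← pathTime_add, Nat.add_sub_cancel' hjn]

theorem exists_injOn_path_le {w : Sym2 (Vtx d) → ℝ} (hw : ∀ e, 0 ≤ w e) (B : Set (Vtx d))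
    {x y : Vtx d} (n : ℕ) (p : ℕ → Vtx d) (hp : IsPath n p x y) (hpB : ∀ k ≤ n, p k ∈ B) :
    ∃ m q, IsPath m q x y ∧ (∀ k ≤ m, q k ∈ B) ∧ Set.InjOn q (Set.Iic m) ∧
      pathTime w m q ≤ pathTime w n p := by
  induction n using Nat.strong_induction_on generalizing p with
  | _ n ih =>
  by_cases hinj : Set.InjOn p (Set.Iic n)
  · exact ⟨n, p, hp, hpB, hinj, le_rfl⟩
  obtain ⟨i, j, hij, hjn, heq⟩ : ∃ i j, i < j ∧ j ≤ n ∧ p i = p j := by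
    simp only [Set.InjOn, Set.mem_Iic, not_forall] at hinj
    obtain ⟨a, ha, b, hb, hab, hne⟩ := hinj
    rcases lt_or_gt_of_ne hne with h | h
    exacts [⟨a, b, h, hb, hab⟩, ⟨b, a, h, ha, hab.symm⟩]
  obtain ⟨m, q, hq, hqB, hqinj, hqt⟩ := ih (i + (n - j)) (by omega) _
    (hp.shortcut hij.le hjn heq)
    (concatPath_mem (fun k hk => hpB k (by omega)) fun k hk => hpB _ (by omega))
  exact ⟨m, q, hq, hqB, hqinj, hqt.trans (pathTime_shortcut_le hw hij.le hjn heq)⟩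

lemma lt_ncard_of_injOn {B : Set (Vtx d)} (hB : B.Finite) {m : ℕ} {q : ℕ → Vtx d}
    (hqB : ∀ k ≤ m, q k ∈ B) (hinj : Set.InjOn q (Set.Iic m)) : m < B.ncard := by
  have := Set.ncard_le_ncard_of_injOn (s := Set.Iic m) q (fun k hk => hqB k hk) hinj hB
  rwa [← Finset.coe_Iic, Set.ncard_coe_finset, Nat.card_Iic, Nat.add_one_le_iff] at this

lemma finite_setOf_pathTime (w : Sym2 (Vtx d) → ℝ) {B : Set (Vtx d)} (hB : B.Finite) (N : ℕ) :
    {r | ∃ n ≤ N, ∃ p : ℕ → Vtx d, (∀ k ≤ n, p k ∈ B) ∧ r = pathTime w n p}.Finite := by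
  refine (((Set.finite_Iic N).prod (Set.Finite.pi fun _ : Fin (N + 1) => hB)).image
    fun z => pathTime w z.1 fun k => if h : k < N + 1 then z.2 ⟨k, h⟩ else 0).subset ?_
  rintro _ ⟨n, hn, p, hpB, rfl⟩
  refine ⟨(n, fun k => p (min k n)), ⟨hn, fun k _ => hpB _ (min_le_right _ _)⟩, ?_⟩
  refine Finset.sum_congr rfl fun k hk => ?_
  rw [Finset.mem_range] at hk
  simp [show k < N + 1 by omega, show k + 1 < N + 1 by omega, Nat.min_eq_left hk.le,
    Nat.min_eq_left (Nat.succ_le_of_lt hk)]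

end Paths

section PassageTime

variable {d : ℕ}

lemma dist1_nonneg (x y : Vtx d) : 0 ≤ dist1 x y :=
  Finset.sum_nonneg fun i _ => abs_nonneg (x i - y i)

lemma exists_dist1_eq_one_of_ne {x y : Vtx d} (h : x ≠ y) :
    ∃ z, dist1 x z = 1 ∧ dist1 z y + 1 = dist1 x y := by
  obtain ⟨i, hi⟩ := Function.ne_iff.1 h
  set s : ℤ := if x i < y i then 1 else -1 with hs
  refine ⟨x + Pi.single i s, ?_, ?_⟩
  · unfold dist1
    rw [Fintype.sum_eq_single i fun j hj => by simp [hj]]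
    simp only [Pi.add_apply, Pi.single_eq_same, sub_add_cancel_left, abs_neg, hs]
    split_ifs <;> simp
  · unfold dist1
    rw [Fintype.sum_eq_add_sum_compl i, Fintype.sum_eq_add_sum_compl i fun j => |x j - y j|]
    have hrest : ∀ j ∈ ({i}ᶜ : Finset (Fin d)), |(x + Pi.single i s : Vtx d) j - y j| = |x j - y j| := by
      intro j hj
      simp [Finset.mem_singleton.not.1 (Finset.mem_compl.1 hj)]
    have hi : |x i + s - y i| + 1 = |x i - y i| := by
      rw [hs]
      split_ifs <;> grind
    rw [Finset.sum_congr rfl hrest, Pi.add_apply, Pi.single_eq_same]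
    linarith

theorem exists_path (x y : Vtx d) : ∃ n p, IsPath n p x y := by
  obtain ⟨N, hN⟩ : ∃ N : ℕ, dist1 x y = N := Int.eq_ofNat_of_zero_le (dist1_nonneg x y)
  induction N using Nat.strong_induction_on generalizing x with
  | _ N ih =>
  by_cases hxy : x = y
  · exact ⟨0, fun _ => x, rfl, hxy, by simp⟩
  obtain ⟨z, hxz, hzy⟩ := exists_dist1_eq_one_of_ne hxy
  have hz := dist1_nonneg z y
  obtain ⟨m, q, hq⟩ := ih (N - 1) (by omega) z (by omega)
  exact ⟨1 + m, _, (isPath_one hxz).concat hq⟩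

lemma PT_le {w : Sym2 (Vtx d) → ℝ} (hw : ∀ e, 0 ≤ w e) {n : ℕ} {p : ℕ → Vtx d} {x y : Vtx d}
    (hp : IsPath n p x y) : PT w x y ≤ pathTime w n p :=
  csInf_le ⟨0, by rintro _ ⟨m, q, -, rfl⟩; exact pathTime_nonneg hw m q⟩ ⟨n, p, hp, rfl⟩

lemma PT_nonneg {w : Sym2 (Vtx d) → ℝ} (hw : ∀ e, 0 ≤ w e) (x y : Vtx d) : 0 ≤ PT w x y := by
  obtain ⟨n, p, hp⟩ := exists_path x y
  refine le_csInf ⟨_, n, p, hp, rfl⟩ ?_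
  rintro _ ⟨m, q, -, rfl⟩
  exact pathTime_nonneg hw m q

lemma exists_pathTime_lt (w : Sym2 (Vtx d) → ℝ) (x y : Vtx d) {c : ℝ} (hc : PT w x y < c) :
    ∃ n p, IsPath n p x y ∧ pathTime w n p < c := by
  obtain ⟨n, p, hp⟩ := exists_path x y
  obtain ⟨_, ⟨m, q, hq, rfl⟩, hlt⟩ := exists_lt_of_csInf_lt (by exact ⟨_, n, p, hp, rfl⟩) hc
  exact ⟨m, q, hq, hlt⟩

lemma PT_le_PT_add_pathTime {w : Sym2 (Vtx d) → ℝ} (hw : ∀ e, 0 ≤ w e) (x : Vtx d) {n : ℕ}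
    {p : ℕ → Vtx d} {y z : Vtx d} (hp : IsPath n p y z) : PT w x z ≤ PT w x y + pathTime w n p := by
  obtain ⟨m, q, hq⟩ := exists_path x y
  have : PT w x z - pathTime w n p ≤ PT w x y := by
    refine le_csInf ⟨_, m, q, hq, rfl⟩ ?_
    rintro _ ⟨m', q', hq', rfl⟩
    have := PT_le hw (hq'.concat hp)
    rw [pathTime_concatPath w (hq'.2.1.trans hp.1.symm)] at this
    linarith
  linarith

theorem exists_geodesic_of_confined {w : Sym2 (Vtx d) → ℝ} (hw : ∀ e, 0 ≤ w e) {x y : Vtx d}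
    {B : Set (Vtx d)} (hB : B.Finite) {c : ℝ} (hc : PT w x y < c)
    (hconf : ∀ n p, IsPath n p x y → pathTime w n p < c → ∀ k ≤ n, p k ∈ B) :
    ∃ n p, IsPath n p x y ∧ pathTime w n p = PT w x y := by
  set S := {r | ∃ n p, IsPath n p x y ∧ (∀ k ≤ n, p k ∈ B) ∧ Set.InjOn p (Set.Iic n) ∧
    r = pathTime w n p}
  have hbelow : ∀ n p, IsPath n p x y → pathTime w n p < c → ∃ r ∈ S, r ≤ pathTime w n p := by
    intro n p hp hpc
    obtain ⟨m, q, hq, hqB, hqinj, hqt⟩ := exists_injOn_path_le hw B n p hp (hconf n p hp hpc)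
    exact ⟨_, ⟨m, q, hq, hqB, hqinj, rfl⟩, hqt⟩
  have hfin : S.Finite := (finite_setOf_pathTime w hB B.ncard).subset <| by
    rintro _ ⟨n, p, -, hpB, hinj, rfl⟩
    exact ⟨n, (lt_ncard_of_injOn hB hpB hinj).le, p, hpB, rfl⟩
  obtain ⟨n, p, hp, hpc⟩ := exists_pathTime_lt w x y hc
  obtain ⟨r₀, hr₀, -⟩ := hbelow n p hp hpc
  obtain ⟨_, ⟨m, q, hq, -, -, rfl⟩, hmin⟩ := Set.exists_min_image S id hfin ⟨r₀, hr₀⟩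
  refine ⟨m, q, hq, le_antisymm ?_ (PT_le hw hq)⟩
  by_contra! hlt
  obtain ⟨n', p', hp', hp't⟩ := exists_pathTime_lt w x y (lt_min hlt hc)
  obtain ⟨r, hr, hrle⟩ := hbelow n' p' hp' (hp't.trans_le (min_le_right _ _))
  exact (hmin r hr).not_gt (hrle.trans_lt (hp't.trans_le (min_le_left _ _)))

def box (d M : ℕ) : Set (Vtx d) := Set.univ.pi fun _ => Set.Icc (-(M : ℤ)) M

lemma finite_box (d M : ℕ) : (box d M).Finite :=
  Set.Finite.pi fun _ => Set.finite_Icc _ _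

lemma exists_forall_mem_box {w : Sym2 (Vtx d) → ℝ} (hw : ∀ e, 0 ≤ w e)
    (hT : Tendsto (fun n : ℕ =>
        sInf {r : ℝ | ∃ y : Vtx d, (∃ i, (n : ℤ) < |y i|) ∧ r = PT w 0 y}) atTop atTop)
    (x y : Vtx d) (c : ℝ) :
    ∃ M : ℕ, ∀ n p, IsPath n p x y → pathTime w n p < c → ∀ k ≤ n, p k ∈ box d M := by
  obtain ⟨M, hM⟩ := (hT.eventually (eventually_ge_atTop (PT w 0 x + c))).exists
  refine ⟨M, fun n p hp hpc k hk => ?_⟩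
  by_contra hout
  have hexit : ∃ i, (M : ℤ) < |p k i| := by
    simpa only [box, Set.mem_univ_pi, Set.mem_Icc, ← abs_le, not_forall, not_le] using hout
  have hbdd : BddBelow {r : ℝ | ∃ z : Vtx d, (∃ i, (M : ℤ) < |z i|) ∧ r = PT w 0 z} :=
    ⟨0, by rintro _ ⟨z, -, rfl⟩; exact PT_nonneg hw 0 z⟩
  have := csInf_le hbdd ⟨p k, hexit, rfl⟩
  have := PT_le_PT_add_pathTime hw 0 (hp.take hk)
  have := pathTime_mono hw p hk
  linarith

end PassageTime

lemma liftW_nonneg {d : ℕ} {t : {e : Sym2 (Vtx d) // IsNNEdge e} → ℝ} (hnn : ∀ e, 0 ≤ t e)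
    (e : Sym2 (Vtx d)) : 0 ≤ liftW t e := by
  unfold liftW
  split_ifs
  exacts [hnn _, le_rfl]

theorem stmt14_general (d : ℕ)
    (t : {e : Sym2 (Vtx d) // IsNNEdge e} → ℝ) (hnn : ∀ e, 0 ≤ t e)
    (hT : Tendsto (fun n : ℕ =>
        sInf {r : ℝ | ∃ y : Vtx d, (∃ i, (n : ℤ) < |y i|) ∧ r = PT (liftW t) 0 y})
      atTop atTop) :
    ∀ x y : Vtx d, ∃ (n : ℕ) (p : ℕ → Vtx d), IsPath n p x y ∧
      pathTime (liftW t) n p = PT (liftW t) x y ∧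
      ∀ i j : ℕ, i ≤ n → j ≤ n → p i = p j → i = j := by
  intro x y
  have hw := liftW_nonneg hnn
  obtain ⟨M, hM⟩ := exists_forall_mem_box hw hT x y (PT (liftW t) x y + 1)
  obtain ⟨n, p, hp, hpt⟩ := exists_geodesic_of_confined hw (finite_box d M) (lt_add_one _) hM
  obtain ⟨m, q, hq, -, hinj, hqt⟩ :=
    exists_injOn_path_le hw Set.univ n p hp fun _ _ => Set.mem_univ _
  exact ⟨m, q, hq, le_antisymm (hqt.trans hpt.le) (PT_le hw hq), fun i j hi hj h => hinj hi hj h⟩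

/-- if the weight configuration satisfies
`T(0, ℤ^d ∖ [−n,n]^d) → ∞`, then any two vertices are joined by a (self-avoiding)
geodesic. -/
theorem stmt14 (d : ℕ) (hd : 1 ≤ d)
    (t : {e : Sym2 (Vtx d) // IsNNEdge e} → ℝ) (hnn : ∀ e, 0 ≤ t e)
    (hT : Tendsto (fun n : ℕ =>
        sInf {r : ℝ | ∃ y : Vtx d, (∃ i, (n : ℤ) < |y i|) ∧ r = PT (liftW t) 0 y})
      atTop atTop) :
    ∀ x y : Vtx d, ∃ (n : ℕ) (p : ℕ → Vtx d), IsPath n p x y ∧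
      pathTime (liftW t) n p = PT (liftW t) x y ∧
      ∀ i j : ℕ, i ≤ n → j ≤ n → p i = p j → i = j :=
  stmt14_general d t hnn hT
end
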